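/- For each fixed integer n > 1, δ(m,n) → 1 as m → ∞; consequently π − arccos(δ(m,n)) → π as m → ∞. -/

import Mathlib

/-!
For odd `N`, the Veronese map `v ↦ (√(multinomial a) · vᵃ)_{|a| = N}` is continuous and odd, and
satisfies `⟪V v, V w⟫ = ⟪v, w⟫ ^ N`. If `0 = ∑ w_x V x` is a convex combination over a set `X` of
unit vectors with pairwise `⟪x, y⟫ ≥ -δ`, expanding `‖∑ w_x V x‖² = 0` gives `∑ w_x² ≤ δ ^ N`,
whereas Cauchy–Schwarz gives `∑ w_x² ≥ 1 / #X ≥ 1 / (m + n)`. Taking `N` odd of order `m ^ (1 / n)`,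
the Veronese map fits into `ℝ^(m+n-1)` while `(m + n) δ ^ N → 0` for each fixed `δ < 1`, so
`δ(m, n)` eventually exceeds every `δ < 1`.
-/

open Metric RealInnerProductSpace

/-- `BorsukSet m n` is the set of real numbers `δ ∈ (0, 1]` with the property that for
every continuous odd map `f : S^{n-1} → ℝ^{m+n-1}` there is a finite subset `X` of the
sphere `S^{n-1}` of cardinality at most `m+n` and geodesic diameter at most
`π - arccos δ` such that `0` lies in the convex hull of `f(X)`.  The number `δ(m,n)` of
the paper is the least element of this set. -/
def BorsukSet (m n : ℕ) : Set ℝ :=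
  {δ : ℝ | δ ∈ Set.Ioc (0 : ℝ) 1 ∧
    ∀ f : EuclideanSpace ℝ (Fin n) → EuclideanSpace ℝ (Fin (m + n - 1)),
      ContinuousOn f (sphere 0 1) →
      (∀ v ∈ sphere (0 : EuclideanSpace ℝ (Fin n)) 1, f (-v) = -f v) →
      ∃ X : Finset (EuclideanSpace ℝ (Fin n)),
        ↑X ⊆ sphere (0 : EuclideanSpace ℝ (Fin n)) 1 ∧
        X.card ≤ m + n ∧
        (∀ x ∈ X, ∀ y ∈ X, Real.arccos ⟪x, y⟫ ≤ Real.pi - Real.arccos δ) ∧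
        (0 : EuclideanSpace ℝ (Fin (m + n - 1))) ∈ convexHull ℝ (f '' ↑X)}

open Finset Filter Topology

theorem one_le_card_mul_of_zero_mem_convexHull {F : Type*} [NormedAddCommGroup F]
    [InnerProductSpace ℝ F] {Y : Finset F} {ε : ℝ} (hε : 0 ≤ ε) (hnorm : ∀ y ∈ Y, ‖y‖ = 1)
    (hinner : ∀ y ∈ Y, ∀ z ∈ Y, -ε ≤ ⟪y, z⟫) (h0 : (0 : F) ∈ convexHull ℝ (Y : Set F)) :
    1 ≤ #Y * ε := by
  obtain ⟨w, hw0, hw1, hw⟩ := Finset.mem_convexHull'.1 h0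
  -- Expanding `‖∑ w y • y‖² = 0` and discarding the off-diagonal terms `w y w z (⟪y, z⟫ + ε) ≥ 0`.
  have hsq : (1 + ε) * ∑ y ∈ Y, w y ^ 2 ≤ ε :=
    calc (1 + ε) * ∑ y ∈ Y, w y ^ 2
        = ∑ y ∈ Y, w y * w y * (⟪y, y⟫ + ε) := by
          rw [mul_sum]
          refine sum_congr rfl fun y hy => ?_
          rw [real_inner_self_eq_norm_sq, hnorm y hy]
          ring
      _ ≤ ∑ y ∈ Y, ∑ z ∈ Y, w y * w z * (⟪y, z⟫ + ε) :=
          sum_le_sum fun y hy => single_le_sum (f := fun z => w y * w z * (⟪y, z⟫ + ε))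
            (fun z hz => mul_nonneg (mul_nonneg (hw0 y hy) (hw0 z hz))
              (neg_le_iff_add_nonneg.1 (hinner y hy z hz))) hy
      _ = ⟪∑ y ∈ Y, w y • y, ∑ z ∈ Y, w z • z⟫ + ε * (∑ y ∈ Y, w y) ^ 2 := by
          simp only [sum_inner, inner_sum, real_inner_smul_left, real_inner_smul_right, sq,
            sum_mul, mul_sum, ← sum_add_distrib]
          exact sum_congr rfl fun y _ => sum_congr rfl fun z _ => by rw [real_inner_comm z]; ring
      _ = ε := by rw [hw, inner_zero_left, hw1]; ring
  calc (1 : ℝ) = (∑ y ∈ Y, w y) ^ 2 := by rw [hw1, one_pow]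
    _ ≤ #Y * ∑ y ∈ Y, w y ^ 2 := sq_sum_le_card_mul_sum_sq
    _ ≤ #Y * ε := by
      gcongr
      nlinarith [sum_nonneg fun y (_ : y ∈ Y) => sq_nonneg (w y)]

theorem Real.neg_le_of_arccos_le_pi_sub_arccos {a δ : ℝ} (ha : a ∈ Set.Icc (-1) 1)
    (hδ : δ ∈ Set.Icc (-1) 1) (h : Real.arccos a ≤ Real.pi - Real.arccos δ) : -δ ≤ a := by
  rw [← Real.arccos_neg] at h
  exact (Real.strictAntiOn_arccos.le_iff_ge ha ⟨by linarith [hδ.2], by linarith [hδ.1]⟩).1 h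

theorem EuclideanSpace.nonempty_linearIsometry_of_card_le {𝕜 ι κ : Type*} [RCLike 𝕜]
    [Fintype ι] [Fintype κ] (h : Fintype.card ι ≤ Fintype.card κ) :
    Nonempty (EuclideanSpace 𝕜 ι →ₗᵢ[𝕜] EuclideanSpace 𝕜 κ) := by
  classical
  obtain ⟨e⟩ := Function.Embedding.nonempty_of_card_le h
  let b : Module.Basis ι 𝕜 (EuclideanSpace 𝕜 ι) := (EuclideanSpace.basisFun ι 𝕜).toBasis
  let f : EuclideanSpace 𝕜 ι →ₗ[𝕜] EuclideanSpace 𝕜 κ :=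
    b.constr 𝕜 fun i => EuclideanSpace.single (e i) 1
  have hb : Orthonormal 𝕜 b := by simp [b]
  have hf : Orthonormal 𝕜 (f ∘ b) := by
    have : f ∘ b = (EuclideanSpace.basisFun κ 𝕜) ∘ e := by
      ext i : 1
      simp [f, b]
    rw [this]
    exact (EuclideanSpace.basisFun κ 𝕜).orthonormal.comp e e.injective
  exact ⟨f.isometryOfOrthonormal hb hf⟩

section Veronese

variable {ι : Type*} [Fintype ι] [DecidableEq ι]

theorem card_piAntidiag_univ_le (N : ℕ) :
    #(piAntidiag (univ : Finset ι) N) ≤ (N + 1) ^ Fintype.card ι := by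
  calc #(piAntidiag (univ : Finset ι) N) ≤ #(Fintype.piFinset fun _ : ι => range (N + 1)) := by
        refine card_le_card fun a ha => Fintype.mem_piFinset.2 fun i => mem_range_succ_iff.2 ?_
        rw [← (mem_piAntidiag.1 ha).1]
        exact single_le_sum (fun _ _ => Nat.zero_le _) (mem_univ i)
    _ = (N + 1) ^ Fintype.card ι := by simp

noncomputable def veronese (N : ℕ) (v : EuclideanSpace ℝ ι) :
    EuclideanSpace ℝ (piAntidiag (univ : Finset ι) N) :=
  WithLp.toLp 2 fun a : piAntidiag (univ : Finset ι) N =>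
    √(Nat.multinomial univ (a : ι → ℕ) : ℝ) * ∏ i, v i ^ (a : ι → ℕ) i

theorem continuous_veronese (N : ℕ) : Continuous (veronese (ι := ι) N) := by
  unfold veronese
  fun_prop

theorem veronese_neg {N : ℕ} (hN : Odd N) (v : EuclideanSpace ℝ ι) :
    veronese N (-v) = -veronese N v := by
  ext a
  have hsum : ∑ i, (a : ι → ℕ) i = N := (mem_piAntidiag.1 a.2).1
  simp only [veronese, PiLp.neg_apply]
  rw [prod_congr rfl fun i _ => neg_pow (v i) _, prod_mul_distrib, prod_pow_eq_pow_sum, hsum,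
    hN.neg_one_pow]
  ring

theorem inner_veronese (N : ℕ) (v w : EuclideanSpace ℝ ι) :
    ⟪veronese N v, veronese N w⟫ = ⟪v, w⟫ ^ N := by
  rw [PiLp.inner_apply, PiLp.inner_apply, sum_pow_eq_sum_piAntidiag,
    ← sum_coe_sort (univ.piAntidiag N)]
  refine sum_congr rfl fun a _ => ?_
  simp only [veronese, RCLike.inner_apply, conj_trivial]
  rw [mul_mul_mul_comm, Real.mul_self_sqrt (Nat.cast_nonneg _), ← prod_mul_distrib]
  simp only [mul_pow, mul_comm]

theorem norm_veronese (N : ℕ) (v : EuclideanSpace ℝ ι) : ‖veronese N v‖ = ‖v‖ ^ N := by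
  rw [← sq_eq_sq₀ (norm_nonneg _) (by positivity), ← real_inner_self_eq_norm_sq,
    inner_veronese, real_inner_self_eq_norm_sq, ← pow_mul, ← pow_mul, mul_comm]

end Veronese

theorem one_le_mul_pow_of_mem_borsukSet {m n N : ℕ} {δ : ℝ} (hδ : δ ∈ BorsukSet m n)
    (hN : Odd N) (hdim : (N + 1) ^ n ≤ m + n - 1) : 1 ≤ ((m : ℝ) + n) * δ ^ N := by
  obtain ⟨⟨hδ0, hδ1⟩, hδ⟩ := hδ
  obtain ⟨L⟩ : Nonempty (EuclideanSpace ℝ (piAntidiag (univ : Finset (Fin n)) N) →ₗᵢ[ℝ]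
      EuclideanSpace ℝ (Fin (m + n - 1))) :=
    EuclideanSpace.nonempty_linearIsometry_of_card_le <| by
      simpa using (card_piAntidiag_univ_le N).trans (by simpa using hdim)
  set f := fun v => L (veronese N v) with hf
  have hf_inner : ∀ v w, ⟪f v, f w⟫ = ⟪v, w⟫ ^ N := fun v w => by
    rw [hf, L.inner_map_map, inner_veronese]
  obtain ⟨X, hXS, hXcard, hXdiam, hX0⟩ := hδ f
    (L.continuous.comp (continuous_veronese N)).continuousOn
    (fun v _ => by simp only [hf, veronese_neg hN, map_neg])
  have hunit : ∀ x ∈ X, ‖x‖ = 1 := fun x hx => mem_sphere_zero_iff_norm.1 (hXS hx)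
  rw [← coe_image] at hX0
  have key := one_le_card_mul_of_zero_mem_convexHull (pow_nonneg hδ0.le N) ?_ ?_ hX0
  · calc (1 : ℝ) ≤ #(X.image f) * δ ^ N := key
      _ ≤ ((m : ℝ) + n) * δ ^ N := by
        gcongr
        exact_mod_cast card_image_le.trans hXcard
  · simp only [mem_image, forall_exists_index, and_imp, forall_apply_eq_imp_iff₂]
    intro x hx
    rw [hf, L.norm_map, norm_veronese, hunit x hx, one_pow]
  · simp only [mem_image, forall_exists_index, and_imp, forall_apply_eq_imp_iff₂]
    intro x hx y hy
    have hxy : -δ ≤ ⟪x, y⟫ := Real.neg_le_of_arccos_le_pi_sub_arccos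
      (abs_le.1 (by simpa [hunit x hx, hunit y hy] using abs_real_inner_le_norm x y))
      ⟨by linarith, hδ1⟩ (hXdiam x hx y hy)
    rw [hf_inner, ← hN.neg_pow]
    exact hN.pow_le_pow.2 hxy

theorem tendsto_add_three_pow_add_mul_pow (n : ℕ) {δ : ℝ} (hδ0 : 0 < δ) (hδ1 : δ < 1) :
    Tendsto (fun N : ℕ => (((N + 3 : ℕ) : ℝ) ^ n + n) * δ ^ N) atTop (𝓝 0) := by
  have hpoly := ((tendsto_pow_const_mul_const_pow_of_lt_one n hδ0.le hδ1).comp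
    (tendsto_add_atTop_nat 3)).div_const (δ ^ 3)
  have hgeom := (tendsto_pow_atTop_nhds_zero_of_lt_one hδ0.le hδ1).const_mul (n : ℝ)
  rw [zero_div] at hpoly
  rw [mul_zero] at hgeom
  refine (zero_add (0 : ℝ) ▸ hpoly.add hgeom).congr fun N => ?_
  simp only [Function.comp_apply, pow_add]
  field_simp

theorem eventually_exists_odd_pow_le {n : ℕ} (hn : n ≠ 0) {δ : ℝ} (hδ0 : 0 < δ) (hδ1 : δ < 1) :
    ∀ᶠ m : ℕ in atTop, ∃ N : ℕ, Odd N ∧ (N + 1) ^ n ≤ m ∧ ((m : ℝ) + n) * δ ^ N < 1 := by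
  have hroot : Tendsto (Nat.nthRoot n) atTop atTop :=
    tendsto_atTop_atTop.2 fun a => ⟨a ^ n, fun b hb => (Nat.le_nthRoot_iff hn).2 hb⟩
  -- the largest odd `N` with `N + 1 ≤ ⌊m ^ (1 / n)⌋`, once that root is at least 2
  let N : ℕ → ℕ := fun m => 2 * ((Nat.nthRoot n m - 2) / 2) + 1
  have hN : Tendsto N atTop atTop :=
    tendsto_atTop_mono (fun m => show Nat.nthRoot n m - 2 ≤ N m by simp only [N]; omega)
      ((tendsto_sub_atTop_nat 2).comp hroot)
  have hsmall : ∀ᶠ m in atTop, (((N m + 3 : ℕ) : ℝ) ^ n + n) * δ ^ N m < 1 :=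
    ((tendsto_add_three_pow_add_mul_pow n hδ0 hδ1).comp hN).eventually_lt_const one_pos
  have hroot2 : ∀ᶠ m in atTop, 2 ≤ Nat.nthRoot n m := hroot.eventually_ge_atTop 2
  filter_upwards [hsmall, hroot2] with m hm_small hm_root
  have hNm : N m + 1 ≤ Nat.nthRoot n m ∧ Nat.nthRoot n m + 1 ≤ N m + 3 := by
    simp only [N]
    omega
  refine ⟨N m, odd_two_mul_add_one _, ?_, ?_⟩
  · exact (Nat.pow_le_pow_left hNm.1 n).trans (Nat.pow_nthRoot_le_iff.2 (Or.inl hn))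
  · have hm : m < (N m + 3) ^ n :=
      (Nat.lt_pow_nthRoot_add_one hn m).trans_le (Nat.pow_le_pow_left hNm.2 n)
    calc ((m : ℝ) + n) * δ ^ N m ≤ (((N m + 3 : ℕ) : ℝ) ^ n + n) * δ ^ N m := by
          gcongr
          exact_mod_cast hm.le
      _ < 1 := hm_small

theorem eventually_lt_of_mem_borsukSet {n : ℕ} (hn : n ≠ 0) {δ₀ : ℝ} (hδ₀ : δ₀ < 1) :
    ∀ᶠ m in atTop, ∀ δ ∈ BorsukSet m n, δ₀ < δ := by
  rcases le_or_gt δ₀ 0 with hδ₀0 | hδ₀0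
  · exact Eventually.of_forall fun m δ hδ => hδ₀0.trans_lt hδ.1.1
  filter_upwards [eventually_exists_odd_pow_le hn hδ₀0 hδ₀] with m ⟨N, hN, hdim, hsmall⟩ δ hδ
  by_contra! hle
  have hone := one_le_mul_pow_of_mem_borsukSet hδ hN (by omega)
  have hmono : ((m : ℝ) + n) * δ ^ N ≤ ((m : ℝ) + n) * δ₀ ^ N := by
    gcongr
    exact hδ.1.1.le
  linarith

/-- Theorem 4.2(vi) of the paper. Fix `n > 1` and let `d m = δ(m, n)`
(the least element of `BorsukSet m n`).  Then `δ(m, n) → 1` as `m → ∞`, and hence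
`π - arccos (δ(m, n)) → π`. -/
theorem stmt18 (n : ℕ) (hn : 1 < n) (d : ℕ → ℝ)
    (hd : ∀ m, 1 ≤ m → IsLeast (BorsukSet m n) (d m)) :
    Filter.Tendsto d Filter.atTop (nhds 1) ∧
    Filter.Tendsto (fun m => Real.pi - Real.arccos (d m)) Filter.atTop
      (nhds Real.pi) := by
  have hmem : ∀ᶠ m in atTop, d m ∈ BorsukSet m n :=
    (eventually_ge_atTop 1).mono fun m hm => (hd m hm).1
  have hlim : Tendsto d atTop (𝓝 1) := by
    refine tendsto_order.2 ⟨fun a ha => ?_, fun a ha => ?_⟩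
    · filter_upwards [hmem, eventually_lt_of_mem_borsukSet (by omega : n ≠ 0) ha]
        with m hm hlt using hlt _ hm
    · filter_upwards [hmem] with m hm using hm.1.2.trans_lt ha
  refine ⟨hlim, ?_⟩
  simpa using tendsto_const_nhds.sub ((Real.continuous_arccos.tendsto 1).comp hlim)
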